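/- (Lemma 3(i)) Let f,g,h,l be a permutation of 1,2,3,4 and let ρ be a pure density matrix on (ℂ^d)^{⊗4} that is separable under the bipartition fgh|l, i.e. ρ = ρ_{fgh} ⊗ ρ_l (up to the corresponding permutation of tensor factors) with ρ_{fgh} a density matrix on (ℂ^d)^{⊗3} and ρ_l a density matrix on ℂ^d. Then for every k = 1,…,d²−1, ‖T_{fgh|l}‖_k ≤ 4(d−1)√(d²+d+1)/d². -/

import Mathlib

open Matrix ComplexOrder

/-- The singular values of a real matrix `M`: square roots of eigenvalues of `Mᴴ * M`. -/
noncomputable def singVals {α β : Type*} [Fintype α] [Fintype β] [DecidableEq β]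
    (M : Matrix α β ℝ) : β → ℝ :=
  fun i => Real.sqrt ((Matrix.isHermitian_conjTranspose_mul_self M).eigenvalues i)

/-- The Ky Fan `k`-norm of a real matrix: the sum of its `k` largest singular values
(realized as the largest sum of singular values over index sets of size at most `k`). -/
noncomputable def kyFan {α β : Type*} [Fintype α] [Fintype β] [DecidableEq β]
    (k : ℕ) (M : Matrix α β ℝ) : ℝ :=
  (Finset.univ.powerset.filter (fun s : Finset β => s.card ≤ k)).sup'
    ⟨∅, by simp⟩ (fun s => ∑ i ∈ s, singVals M i)

/-- Separability of an `n`-partite state (indexed by `Fin n → Fin d`) under the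
bipartition `A | Aᶜ`: `ρ` is, up to the permutation of tensor factors, the tensor
product of a density matrix on the factors in `A` and one on the factors not in `A`. -/
def SepUnder {n d : ℕ} (ρ : Matrix (Fin n → Fin d) (Fin n → Fin d) ℂ)
    (A : Finset (Fin n)) : Prop :=
  ∃ (ρA : Matrix ({j // j ∈ A} → Fin d) ({j // j ∈ A} → Fin d) ℂ)
    (ρB : Matrix ({j // j ∉ A} → Fin d) ({j // j ∉ A} → Fin d) ℂ),
    ρA.PosSemidef ∧ ρA.trace = 1 ∧ ρB.PosSemidef ∧ ρB.trace = 1 ∧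
    ∀ v w, ρ v w = ρA (fun j => v j.1) (fun j => w j.1) * ρB (fun j => v j.1) (fun j => w j.1)

/-- The full `n`-body correlation tensor entry `t_{a 0, …, a (n-1)}` of `ρ`,
i.e. `tr (ρ · (λ_{a 0} ⊗ ⋯ ⊗ λ_{a (n-1)}))`. -/
noncomputable def corrFull {n d : ℕ} (lam : Fin (d ^ 2 - 1) → Matrix (Fin d) (Fin d) ℂ)
    (ρ : Matrix (Fin n → Fin d) (Fin n → Fin d) ℂ) (a : Fin n → Fin (d ^ 2 - 1)) : ℝ :=
  (Matrix.trace (ρ * Matrix.of (fun v w : Fin n → Fin d => ∏ j, lam (a j) (v j) (w j)))).re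

/-- The matricization `T_{fgh|l}` of the 4-body correlation tensor: rows indexed by
`(i_f, i_g, i_h)`, columns by `i_l`. -/
noncomputable def T3v1 {d : ℕ} (lam : Fin (d ^ 2 - 1) → Matrix (Fin d) (Fin d) ℂ)
    (ρ : Matrix (Fin 4 → Fin d) (Fin 4 → Fin d) ℂ) (f g h l : Fin 4) :
    Matrix (Fin (d ^ 2 - 1) × Fin (d ^ 2 - 1) × Fin (d ^ 2 - 1)) (Fin (d ^ 2 - 1)) ℝ :=
  Matrix.of fun r c => corrFull lam ρ
    (fun j => if j = f then r.1 else if j = g then r.2.1 else if j = h then r.2.2 else c)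

/-!
For a product state `ρ = ρ_{fgh} ⊗ ρ_l` every correlation factors,
`t_{i_f i_g i_h i_l} = t^{fgh}_{i_f i_g i_h} · t^{l}_{i_l}`, so `T_{fgh|l} = u vᵀ` has rank one and
each of its Ky Fan norms is at most `‖u‖ ‖v‖`. The identity together with the products
`λ_{b₁} ⊗ ⋯ ⊗ λ_{bₘ}` is an orthogonal family for `(A, B) ↦ tr (A B)`, with norms `d^m` and `2^m`,
so Bessel's inequality and `tr σ² ≤ (tr σ)² = 1` give `‖u‖² ≤ 8 (1 - d⁻³)` and
`‖v‖² ≤ 2 (1 - d⁻¹)`; the product of these is `(4 (d - 1) / d²)² (d² + d + 1)`.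
-/

open Finset
open scoped Kronecker

namespace Matrix
variable {n : Type*} [Fintype n]

theorem IsHermitian.im_trace_mul {A B : Matrix n n ℂ} (hA : A.IsHermitian)
    (hB : B.IsHermitian) : (A * B).trace.im = 0 := by
  have h : star (A * B).trace = (A * B).trace := by
    rw [← trace_conjTranspose, conjTranspose_mul, hA.eq, hB.eq, trace_mul_comm]
  exact Complex.conj_eq_iff_im.mp h

theorem IsHermitian.trace_mul_self {𝕜 : Type*} [RCLike 𝕜] [DecidableEq n] {A : Matrix n n 𝕜}
    (hA : A.IsHermitian) : (A * A).trace = ∑ i, (hA.eigenvalues i : 𝕜) ^ 2 := by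
  conv_lhs => rw [hA.spectral_theorem, ← map_mul, Unitary.conjStarAlgAut_apply, trace_mul_cycle,
    Unitary.coe_star_mul_self, one_mul, diagonal_mul_diagonal, trace_diagonal]
  simp [sq]

theorem PosSemidef.re_trace_mul_self_le_sq [DecidableEq n] {A : Matrix n n ℂ}
    (hA : A.PosSemidef) : (A * A).trace.re ≤ A.trace.re ^ 2 := by
  rw [hA.isHermitian.trace_mul_self, hA.isHermitian.trace_eq_sum_eigenvalues]
  norm_cast
  exact sum_sq_le_sq_sum_of_nonneg fun i _ => hA.eigenvalues_nonneg i

/-- Bessel's inequality for the Hilbert–Schmidt product `tr (A * B)` of Hermitian matrices. -/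
theorem IsHermitian.sum_sq_re_trace_mul_div_le {κ : Type*} [Fintype κ] [DecidableEq κ]
    {σ : Matrix n n ℂ} (hσ : σ.IsHermitian) {B : κ → Matrix n n ℂ} (hB : ∀ i, (B i).IsHermitian)
    {c : κ → ℝ} (horth : ∀ i j, (B i * B j).trace = if i = j then (c i : ℂ) else 0) :
    ∑ i, (σ * B i).trace.re ^ 2 / c i ≤ (σ * σ).trace.re := by
  set t : κ → ℝ := fun i => (σ * B i).trace.re
  have ht : ∀ i, (σ * B i).trace = t i := fun i =>
    Complex.ext rfl (by simpa using hσ.im_trace_mul (hB i))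
  have hcoef : ∀ i, t i / c i * (t i / c i * c i) = t i ^ 2 / c i := fun i => by
    rcases eq_or_ne (c i) 0 with hc | hc
    · simp [hc]
    · field_simp
  -- `P` is the orthogonal projection of `σ` onto the span of the `B i`; expand `tr ((σ - P)²) ≥ 0`.
  set P : Matrix n n ℂ := ∑ i, ((t i / c i : ℝ) : ℂ) • B i
  have hP : P.IsHermitian := by
    simp only [IsHermitian, P, conjTranspose_sum, conjTranspose_smul, (hB _).eq, Complex.star_def,
      Complex.conj_ofReal]
  have hσP : (σ * P).trace = ((∑ i, t i ^ 2 / c i : ℝ) : ℂ) := by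
    simp only [P, mul_sum, trace_sum, Matrix.mul_smul, trace_smul, ht, smul_eq_mul]
    push_cast
    exact sum_congr rfl fun i _ => by ring
  have hPP : (P * P).trace = ((∑ i, t i ^ 2 / c i : ℝ) : ℂ) := by
    simp only [P, sum_mul, mul_sum, trace_sum, smul_mul, Matrix.mul_smul, trace_smul, horth,
      smul_eq_mul, mul_ite, mul_zero, sum_ite_eq', mem_univ, if_true]
    simp_rw [← hcoef]
    push_cast
    rfl
  have hnonneg : 0 ≤ ((σ - P) * (σ - P)).trace.re := by
    have := (posSemidef_conjTranspose_mul_self (σ - P)).trace_nonneg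
    rw [(hσ.sub hP).eq] at this
    exact (Complex.nonneg_iff.mp this).1
  rw [sub_mul, mul_sub, mul_sub, trace_sub, trace_sub, trace_sub, trace_mul_comm P σ, hσP, hPP]
    at hnonneg
  simp only [Complex.sub_re, Complex.ofReal_re] at hnonneg
  linarith

variable {ι κ R : Type*} [Fintype ι] [CommSemiring R]

def piTensor (A : ι → Matrix κ κ R) : Matrix (ι → κ) (ι → κ) R :=
  of fun v w => ∏ j, A j (v j) (w j)

theorem piTensor_mul [Fintype κ] [DecidableEq ι] (A B : ι → Matrix κ κ R) :
    piTensor A * piTensor B = piTensor (A * B) := by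
  ext v w
  simp only [piTensor, mul_apply, of_apply, Pi.mul_apply, ← prod_mul_distrib]
  exact (Fintype.prod_sum fun j x => A j (v j) x * B j x (w j)).symm

theorem trace_piTensor [Fintype κ] [DecidableEq ι] (A : ι → Matrix κ κ R) :
    (piTensor A).trace = ∏ j, (A j).trace :=
  (Fintype.prod_sum fun j x => A j x x).symm

theorem IsHermitian.piTensor [StarRing R] {A : ι → Matrix κ κ R} (hA : ∀ j, (A j).IsHermitian) :
    (Matrix.piTensor A).IsHermitian := by
  ext v w
  simp only [Matrix.piTensor, conjTranspose_apply, of_apply, star_prod]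
  exact prod_congr rfl fun j _ => congrFun₂ (hA j) (v j) (w j)

theorem piTensor_eq_submatrix_kronecker (p : ι → Prop) [DecidablePred p] [Fintype {j // p j}]
    [Fintype {j // ¬p j}] (A : ι → Matrix κ κ R) :
    piTensor A = submatrix (piTensor (fun j : {j // p j} => A j) ⊗ₖ
      piTensor (fun j : {j // ¬p j} => A j))
        (Equiv.piEquivPiSubtypeProd p _) (Equiv.piEquivPiSubtypeProd p _) := by
  ext v w
  simp only [piTensor, submatrix_apply, kroneckerMap_apply, of_apply,
    Equiv.piEquivPiSubtypeProd_apply]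
  convert (Fintype.prod_subtype_mul_prod_subtype p _).symm

theorem trace_submatrix_equiv {m α : Type*} [Fintype κ] [Fintype m] [AddCommMonoid α]
    (A : Matrix m m α) (e : κ ≃ m) : (A.submatrix e e).trace = A.trace :=
  e.sum_comp fun i => A i i

theorem trace_mul_piTensor_of_product [Fintype κ] [DecidableEq ι] (p : ι → Prop)
    [DecidablePred p] [Fintype {j // p j}] [Fintype {j // ¬p j}]
    {ρ : Matrix (ι → κ) (ι → κ) R} {ρA : Matrix ({j // p j} → κ) ({j // p j} → κ) R}
    {ρB : Matrix ({j // ¬p j} → κ) ({j // ¬p j} → κ) R}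
    (hρ : ∀ v w, ρ v w = ρA (fun j => v j) (fun j => w j) * ρB (fun j => v j) (fun j => w j))
    (A : ι → Matrix κ κ R) :
    (ρ * piTensor A).trace = (ρA * piTensor (fun j : {j // p j} => A j)).trace
      * (ρB * piTensor (fun j : {j // ¬p j} => A j)).trace := by
  have hρ' : ρ = (ρA ⊗ₖ ρB).submatrix (Equiv.piEquivPiSubtypeProd p _)
      (Equiv.piEquivPiSubtypeProd p _) := by
    ext v w
    exact hρ v w
  rw [hρ', piTensor_eq_submatrix_kronecker p, submatrix_mul_equiv, trace_submatrix_equiv,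
    ← mul_kronecker_mul, trace_kronecker]

end Matrix

section Correlation

variable {ι κ γ : Type*} [Fintype ι] [DecidableEq ι] [Fintype κ]

noncomputable def corrTensor (lam : γ → Matrix κ κ ℂ) (σ : Matrix (ι → κ) (ι → κ) ℂ)
    (b : ι → γ) : ℝ :=
  (σ * piTensor fun j => lam (b j)).trace.re

theorem ofReal_corrTensor {lam : γ → Matrix κ κ ℂ} (hherm : ∀ i, (lam i).IsHermitian)
    {σ : Matrix (ι → κ) (ι → κ) ℂ} (hσ : σ.IsHermitian) (b : ι → γ) :
    (corrTensor lam σ b : ℂ) = (σ * piTensor fun j => lam (b j)).trace :=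
  Complex.ext rfl <| by
    simpa using (hσ.im_trace_mul (IsHermitian.piTensor fun j => hherm (b j))).symm

theorem corrTensor_of_product (p : ι → Prop) [DecidablePred p] [Fintype {j // p j}]
    [Fintype {j // ¬p j}] {lam : γ → Matrix κ κ ℂ}
    (hherm : ∀ i, (lam i).IsHermitian) {ρ : Matrix (ι → κ) (ι → κ) ℂ}
    {ρA : Matrix ({j // p j} → κ) ({j // p j} → κ) ℂ}
    {ρB : Matrix ({j // ¬p j} → κ) ({j // ¬p j} → κ) ℂ}
    (hA : ρA.IsHermitian) (hB : ρB.IsHermitian)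
    (hρ : ∀ v w, ρ v w = ρA (fun j => v j) (fun j => w j) * ρB (fun j => v j) (fun j => w j))
    (a : ι → γ) :
    corrTensor lam ρ a
      = corrTensor lam ρA (fun j => a j) * corrTensor lam ρB (fun j => a j) := by
  rw [corrTensor, trace_mul_piTensor_of_product p hρ, ← ofReal_corrTensor hherm hA,
    ← ofReal_corrTensor hherm hB, ← Complex.ofReal_mul, Complex.ofReal_re]

theorem trace_mul_piTensor_eq_ite [DecidableEq γ] {lam : γ → Matrix κ κ ℂ}
    (horth : ∀ i j, (lam i * lam j).trace = if i = j then 2 else 0) (b b' : ι → γ) :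
    (piTensor (fun j => lam (b j)) * piTensor (fun j => lam (b' j))).trace
      = if b = b' then 2 ^ Fintype.card ι else 0 := by
  simp only [piTensor_mul, trace_piTensor, Pi.mul_apply, horth, Fintype.prod_ite_zero,
    prod_const, card_univ, funext_iff]

theorem trace_piTensor_eq_zero [Nonempty ι] {lam : γ → Matrix κ κ ℂ}
    (htr : ∀ i, (lam i).trace = 0) (b : ι → γ) : (piTensor fun j => lam (b j)).trace = 0 := by
  rw [trace_piTensor]
  exact prod_eq_zero (mem_univ (Classical.arbitrary ι)) (htr _)

theorem sum_sq_corrTensor_le [Nonempty ι] [Fintype γ] [DecidableEq γ] [DecidableEq κ]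
    {lam : γ → Matrix κ κ ℂ}
    (hherm : ∀ i, (lam i).IsHermitian) (htr : ∀ i, (lam i).trace = 0)
    (horth : ∀ i j, (lam i * lam j).trace = if i = j then 2 else 0)
    {σ : Matrix (ι → κ) (ι → κ) ℂ} (hσ : σ.PosSemidef) (htrσ : σ.trace = 1) :
    ∑ b, corrTensor lam σ b ^ 2
      ≤ 2 ^ Fintype.card ι * (1 - ((Fintype.card κ : ℝ) ^ Fintype.card ι)⁻¹) := by
  set m := Fintype.card ι
  let B : Option (ι → γ) → Matrix (ι → κ) (ι → κ) ℂ := fun o =>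
    o.elim 1 fun b => piTensor fun j => lam (b j)
  let c : Option (ι → γ) → ℝ := fun o => o.elim (Fintype.card κ ^ m) fun _ => 2 ^ m
  have hB : ∀ o, (B o).IsHermitian := by
    rintro (_ | b)
    exacts [isHermitian_one, IsHermitian.piTensor fun j => hherm (b j)]
  have horthB : ∀ o o', (B o * B o').trace = if o = o' then (c o : ℂ) else 0 := by
    rintro (_ | b) (_ | b')
    · simp [B, c, m]
    · simp [B, trace_piTensor_eq_zero htr]
    · simp [B, trace_piTensor_eq_zero htr]
    · simp [B, c, trace_mul_piTensor_eq_ite horth, m]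
  have hbessel := hσ.isHermitian.sum_sq_re_trace_mul_div_le hB horthB
  have hσσ : (σ * σ).trace.re ≤ 1 := by
    simpa [htrσ] using hσ.re_trace_mul_self_le_sq
  simp only [Fintype.sum_option, B, c, Option.elim, mul_one, htrσ, Complex.one_re, one_pow,
    ← sum_div] at hbessel
  change _ / _ + (∑ b, corrTensor lam σ b ^ 2) / _ ≤ _ at hbessel
  have hS : (∑ b, corrTensor lam σ b ^ 2) / 2 ^ m ≤ 1 - ((Fintype.card κ : ℝ) ^ m)⁻¹ := by
    rw [one_div] at hbessel
    linarith
  rwa [div_le_iff₀ (by positivity), mul_comm] at hS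

end Correlation

section KyFan

variable {α β : Type*} [Fintype α] [Fintype β] [DecidableEq β]

theorem singVals_nonneg (M : Matrix α β ℝ) (i : β) : 0 ≤ singVals M i :=
  Real.sqrt_nonneg _

theorem kyFan_le_sum_singVals (k : ℕ) (M : Matrix α β ℝ) : kyFan k M ≤ ∑ i, singVals M i :=
  sup'_le _ _ fun s _ =>
    sum_le_sum_of_subset_of_nonneg (subset_univ s) fun i _ _ => singVals_nonneg M i

theorem sum_singVals_le_sqrt_rank_mul (M : Matrix α β ℝ) :
    ∑ i, singVals M i ≤ √(M.rank * ∑ i, ∑ j, M i j ^ 2) := by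
  set hN := isHermitian_conjTranspose_mul_self M
  set e := hN.eigenvalues
  set χ : β → ℝ := fun i => if e i = 0 then 0 else 1
  have hχ : ∀ i, √(χ i) * √(e i) = singVals M i := fun i => by
    change _ = √(e i)
    by_cases h : e i = 0 <;> simp [χ, h]
  have hrank : ∑ i, χ i = M.rank := by
    rw [← rank_conjTranspose_mul_self, hN.rank_eq_card_non_zero_eigs, Fintype.card_subtype,
      ← sum_boole]
    simp only [χ, ne_eq, ite_not]
    rfl
  have htrace : ∑ i, e i = ∑ i, ∑ j, M i j ^ 2 := by
    have := hN.trace_eq_sum_eigenvalues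
    simp only [RCLike.ofReal_real_eq_id, id] at this
    rw [← this, sum_comm]
    simp [trace, mul_apply, sq]
  calc ∑ i, singVals M i = ∑ i, √(χ i) * √(e i) := sum_congr rfl fun i _ => (hχ i).symm
    _ ≤ √(∑ i, χ i) * √(∑ i, e i) :=
        Real.sum_sqrt_mul_sqrt_le _ (fun i => by positivity)
          (eigenvalues_conjTranspose_mul_self_nonneg M)
    _ = √(M.rank * ∑ i, ∑ j, M i j ^ 2) := by rw [hrank, htrace, Real.sqrt_mul (by positivity)]

theorem kyFan_vecMulVec_le (k : ℕ) (u : α → ℝ) (v : β → ℝ) :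
    kyFan k (vecMulVec u v) ≤ √((∑ i, u i ^ 2) * ∑ j, v j ^ 2) := by
  have hrank : ((vecMulVec u v).rank : ℝ) ≤ 1 := by exact_mod_cast rank_vecMulVec_le u v
  refine (kyFan_le_sum_singVals k _).trans <| (sum_singVals_le_sqrt_rank_mul _).trans ?_
  rw [sum_mul_sum]
  simp only [vecMulVec_apply, mul_pow]
  exact Real.sqrt_le_sqrt <| mul_le_of_le_one_left (by positivity) hrank

end KyFan

theorem corrFull_eq_corrTensor {n d : ℕ} (lam : Fin (d ^ 2 - 1) → Matrix (Fin d) (Fin d) ℂ)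
    (ρ : Matrix (Fin n → Fin d) (Fin n → Fin d) ℂ) (a : Fin n → Fin (d ^ 2 - 1)) :
    corrFull lam ρ a = corrTensor lam ρ a :=
  rfl

theorem Fintype.sum_comp_le_sum_of_injective {α β : Type*} [Fintype α] [Fintype β] {e : α → β}
    (he : Function.Injective e) {F : β → ℝ} (hF : ∀ b, 0 ≤ F b) :
    ∑ a, F (e a) ≤ ∑ b, F b :=
  (sum_map univ ⟨e, he⟩ F).symm.trans_le (sum_le_univ_sum_of_nonneg hF)

theorem sqrt_sixteen_mul_one_sub_inv_pow_eq {x : ℝ} (hx : 1 ≤ x) :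
    √(2 ^ 3 * (1 - (x ^ 3)⁻¹) * (2 ^ 1 * (1 - (x ^ 1)⁻¹)))
      = 4 * (x - 1) * √(x ^ 2 + x + 1) / x ^ 2 := by
  have hx0 : x ≠ 0 := by positivity
  have hsq : 2 ^ 3 * (1 - (x ^ 3)⁻¹) * (2 ^ 1 * (1 - (x ^ 1)⁻¹))
      = (4 * (x - 1) / x ^ 2) ^ 2 * (x ^ 2 + x + 1) := by
    field_simp
    ring
  rw [hsq, Real.sqrt_mul (by positivity), Real.sqrt_sq (div_nonneg (by linarith) (by positivity))]
  ring

section Tripartition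

variable {α γ : Type*} [DecidableEq α]

theorem Fin.ne_of_insert_eq_univ {f g h l : Fin 4}
    (hperm : ({f, g, h, l} : Finset (Fin 4)) = univ) : f ≠ g ∧ f ≠ h ∧ g ≠ h := by
  revert f g h l
  decide

theorem ite_eq_of_mem_insert {f g h j : α} (hj : j ∈ ({f, g, h} : Finset α)) (x y z w : γ) :
    (if j = f then x else if j = g then y else if j = h then z else w)
      = if j = f then x else if j = g then y else z := by
  simp only [mem_insert, mem_singleton] at hj
  split_ifs <;> tauto

/-- The multi-index on the factors `{f, g, h}` encoded by the row `(i_f, i_g, i_h)`. -/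
def rowIndex (f g h : α) (r : γ × γ × γ) (j : {j // j ∈ ({f, g, h} : Finset α)}) : γ :=
  if j.1 = f then r.1 else if j.1 = g then r.2.1 else r.2.2

theorem rowIndex_injective {f g h : α} (hfg : f ≠ g) (hfh : f ≠ h) (hgh : g ≠ h) :
    Function.Injective (rowIndex (γ := γ) f g h) := by
  intro r r' hrr
  have h1 := congrFun hrr ⟨f, by simp⟩
  have h2 := congrFun hrr ⟨g, by simp⟩
  have h3 := congrFun hrr ⟨h, by simp⟩
  simp only [rowIndex, if_pos, hfg.symm, hfh.symm, hgh.symm, if_false] at h1 h2 h3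
  exact Prod.ext h1 (Prod.ext h2 h3)

end Tripartition

theorem T3v1_eq_vecMulVec_of_product {d : ℕ} {lam : Fin (d ^ 2 - 1) → Matrix (Fin d) (Fin d) ℂ}
    (hherm : ∀ i, (lam i).IsHermitian) (f g h l : Fin 4)
    {ρ : Matrix (Fin 4 → Fin d) (Fin 4 → Fin d) ℂ}
    {ρA : Matrix ({j // j ∈ ({f, g, h} : Finset (Fin 4))} → Fin d)
      ({j // j ∈ ({f, g, h} : Finset (Fin 4))} → Fin d) ℂ}
    {ρB : Matrix ({j // j ∉ ({f, g, h} : Finset (Fin 4))} → Fin d)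
      ({j // j ∉ ({f, g, h} : Finset (Fin 4))} → Fin d) ℂ}
    (hA : ρA.IsHermitian) (hB : ρB.IsHermitian)
    (hρ : ∀ v w, ρ v w = ρA (fun j => v j) (fun j => w j) * ρB (fun j => v j) (fun j => w j)) :
    T3v1 lam ρ f g h l = vecMulVec (fun r => corrTensor lam ρA (rowIndex f g h r))
      (fun c => corrTensor lam ρB fun _ => c) := by
  ext r c
  rw [T3v1, of_apply, corrFull_eq_corrTensor, vecMulVec_apply,
    corrTensor_of_product (· ∈ ({f, g, h} : Finset (Fin 4))) hherm hA hB hρ]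
  refine congrArg₂ (· * ·)
    (congrArg (corrTensor lam ρA) (funext fun j => ite_eq_of_mem_insert j.2 r.1 r.2.1 r.2.2 c))
    (congrArg (corrTensor lam ρB) (funext fun j => ?_))
  obtain ⟨j, hj⟩ := j
  simp only [mem_insert, mem_singleton, not_or] at hj
  simp [hj.1, hj.2.1, hj.2.2]

theorem kyFan_T3v1_of_sep_general (d : ℕ) (hd : 2 ≤ d)
    (lam : Fin (d ^ 2 - 1) → Matrix (Fin d) (Fin d) ℂ)
    (hherm : ∀ i, (lam i).IsHermitian)
    (htr : ∀ i, (lam i).trace = 0)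
    (horth : ∀ i j, (lam i * lam j).trace = if i = j then 2 else 0)
    (f g h l : Fin 4) (hperm : ({f, g, h, l} : Finset (Fin 4)) = Finset.univ)
    (ρ : Matrix (Fin 4 → Fin d) (Fin 4 → Fin d) ℂ)
    (hsep : SepUnder ρ {f, g, h})
    (k : ℕ) :
    kyFan k (T3v1 lam ρ f g h l)
      ≤ 4 * ((d : ℝ) - 1) * Real.sqrt ((d : ℝ) ^ 2 + d + 1) / (d : ℝ) ^ 2 := by
  obtain ⟨ρA, ρB, hApsd, hAtr, hBpsd, hBtr, hρ⟩ := hsep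
  obtain ⟨hfg, hfh, hgh⟩ := Fin.ne_of_insert_eq_univ hperm
  have hcardA : Fintype.card {j // j ∈ ({f, g, h} : Finset (Fin 4))} = 3 := by
    rw [Fintype.card_coe, card_eq_three]
    exact ⟨f, g, h, hfg, hfh, hgh, rfl⟩
  have hcardB : Fintype.card {j // j ∉ ({f, g, h} : Finset (Fin 4))} = 1 := by
    rw [Fintype.card_subtype_compl, hcardA, Fintype.card_fin]
  have : Nonempty {j // j ∈ ({f, g, h} : Finset (Fin 4))} := Fintype.card_pos_iff.mp (by omega)
  have : Nonempty {j // j ∉ ({f, g, h} : Finset (Fin 4))} := Fintype.card_pos_iff.mp (by omega)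
  have hu := (Fintype.sum_comp_le_sum_of_injective (rowIndex_injective hfg hfh hgh)
    fun _ => sq_nonneg _).trans (sum_sq_corrTensor_le hherm htr horth hApsd hAtr)
  have hv := (Fintype.sum_comp_le_sum_of_injective Function.const_injective
    fun _ => sq_nonneg _).trans (sum_sq_corrTensor_le hherm htr horth hBpsd hBtr)
  rw [hcardA, Fintype.card_fin] at hu
  rw [hcardB, Fintype.card_fin] at hv
  rw [T3v1_eq_vecMulVec_of_product hherm f g h l hApsd.isHermitian hBpsd.isHermitian hρ]
  calc _ ≤ _ := kyFan_vecMulVec_le k _ _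
    _ ≤ √(2 ^ 3 * (1 - ((d : ℝ) ^ 3)⁻¹) * (2 ^ 1 * (1 - ((d : ℝ) ^ 1)⁻¹))) :=
        Real.sqrt_le_sqrt (mul_le_mul hu hv (sum_nonneg fun _ _ => sq_nonneg _)
          ((sum_nonneg fun _ _ => sq_nonneg _).trans hu))
    _ = _ := sqrt_sixteen_mul_one_sub_inv_pow_eq (Nat.one_le_cast.mpr (by omega))

/-- (Lemma 3(i)) If a pure four-partite state is separable under the bipartition `fgh|l`,
then `‖T_{fgh|l}‖_k ≤ 4(d-1)√(d²+d+1)/d²` for every `k = 1, …, d²-1`. -/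
theorem kyFan_T3v1_of_sep (d : ℕ) (hd : 2 ≤ d)
    (lam : Fin (d ^ 2 - 1) → Matrix (Fin d) (Fin d) ℂ)
    (hherm : ∀ i, (lam i).IsHermitian)
    (htr : ∀ i, (lam i).trace = 0)
    (horth : ∀ i j, (lam i * lam j).trace = if i = j then 2 else 0)
    (f g h l : Fin 4) (hperm : ({f, g, h, l} : Finset (Fin 4)) = Finset.univ)
    (ρ : Matrix (Fin 4 → Fin d) (Fin 4 → Fin d) ℂ)
    (hpsd : ρ.PosSemidef) (htrρ : ρ.trace = 1) (hpure : ρ * ρ = ρ)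
    (hsep : SepUnder ρ {f, g, h})
    (k : ℕ) (hk1 : 1 ≤ k) (hk2 : k ≤ d ^ 2 - 1) :
    kyFan k (T3v1 lam ρ f g h l)
      ≤ 4 * ((d : ℝ) - 1) * Real.sqrt ((d : ℝ) ^ 2 + d + 1) / (d : ℝ) ^ 2 :=
  kyFan_T3v1_of_sep_general d hd lam hherm htr horth f g h l hperm ρ hsep k
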